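/- Let π : G̃ → G be a double cover of weighted graphs and let x be a dilated vertex of G, with unique preimage x̃ and with dval(x) denoting the valence of x in the dilation subgraph G_dil. Then g(x̃) = 2g(x) − 1 + dval(x)/2; in particular dval(x) is even, and if dval(x) = 0 then g(x) ≥ 1. Consequently, every connected component of G_dil is semistable, and in particular has genus at least 1. -/

import Mathlib

open scoped Classical

structure HGraph where
  V : Type
  H : Type
  [fintV : Fintype V]
  [fintH : Fintype H]
  [decV : DecidableEq V]
  [decH : DecidableEq H]
  root : H → V
  inv : H → H
  inv_inv : ∀ h, inv (inv h) = h
  inv_ne : ∀ h, inv h ≠ h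

attribute [instance] HGraph.fintV HGraph.fintH HGraph.decV HGraph.decH

namespace HGraph

variable (G : HGraph)

/-- The setoid on half-edges whose classes are the edges. -/
def edgeSetoid : Setoid G.H where
  r h h' := h' = h ∨ h' = G.inv h
  iseqv := by
    refine ⟨fun h => Or.inl rfl, ?_, ?_⟩
    · rintro a b (rfl | rfl)
      · exact Or.inl rfl
      · exact Or.inr (G.inv_inv a).symm
    · rintro a b c (rfl | rfl) hbc
      · exact hbc
      · rcases hbc with rfl | rfl
        · exact Or.inr rfl
        · exact Or.inl (G.inv_inv a)

instance edgeDec : DecidableRel G.edgeSetoid.r := fun _ _ => instDecidableOr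

/-- The edges of a graph: orbits of the involution on half-edges. -/
def Edge := Quotient G.edgeSetoid

instance : Fintype G.Edge := @Quotient.fintype _ _ G.edgeSetoid G.edgeDec
instance : DecidableEq G.Edge := @Quotient.decidableEq _ G.edgeSetoid G.edgeDec

/-- The edge underlying a half-edge. -/
def edge (h : G.H) : G.Edge := Quotient.mk G.edgeSetoid h

lemma edge_inv (h : G.H) : G.edge (G.inv h) = G.edge h :=
  Quotient.sound (Or.inr (G.inv_inv h).symm)

/-- The valence of a vertex: the number of half-edges rooted at it. -/
def val (v : G.V) : ℕ := (Finset.univ.filter fun h => G.root h = v).card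

/-- Two vertices are adjacent through an edge belonging to `S`. -/
def adjOn (S : Finset G.Edge) (v w : G.V) : Prop :=
  ∃ h, G.edge h ∈ S ∧ G.root h = v ∧ G.root (G.inv h) = w

/-- The spanning subgraph with edge set `S` is connected. -/
def ConnectedOn (S : Finset G.Edge) : Prop :=
  ∀ v w : G.V, Relation.ReflTransGen (G.adjOn S) v w

/-- The graph is connected. -/
def Connected : Prop := Nonempty G.V ∧ G.ConnectedOn Finset.univ

/-- Euler characteristic of a vertex, for a genus function `gV`. -/
def chiZ (gV : G.V → ℤ) (v : G.V) : ℤ := 2 - 2 * gV v - G.val v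

/-- The genus of a (connected) weighted graph. -/
def genusZ (gV : G.V → ℤ) : ℤ :=
  (Fintype.card G.Edge : ℤ) - Fintype.card G.V + 1 + ∑ v, gV v

/-- The number of connected components of the spanning subgraph with edge set `S`. -/
noncomputable def ncomp (S : Finset G.Edge) : ℕ :=
  Nat.card (Quotient (Relation.EqvGen.setoid (G.adjOn S)))

end HGraph

/-- A harmonic morphism of graphs: a graph morphism together with local degrees. -/
structure HarmonicTo (Gt G : HGraph) where
  fV : Gt.V → G.V
  fH : Gt.H → G.H
  root_comm : ∀ h, G.root (fH h) = fV (Gt.root h)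
  inv_comm : ∀ h, fH (Gt.inv h) = G.inv (fH h)
  dV : Gt.V → ℕ
  dH : Gt.H → ℕ
  dV_pos : ∀ v, 0 < dV v
  dH_pos : ∀ h, 0 < dH h
  dH_inv : ∀ h, dH (Gt.inv h) = dH h
  harm : ∀ (w : Gt.V) (h : G.H), G.root h = fV w →
    dV w = ∑ x ∈ Finset.univ.filter (fun x => Gt.root x = w ∧ fH x = h), dH x

namespace HarmonicTo

variable {Gt G : HGraph} (f : HarmonicTo Gt G)

/-- The induced map on edges. -/
def fE : Gt.Edge → G.Edge :=
  Quotient.lift (fun h => G.edge (f.fH h)) (by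
    rintro a b (rfl | rfl)
    · rfl
    · show G.edge (f.fH a) = G.edge (f.fH (Gt.inv a))
      rw [f.inv_comm]
      exact (G.edge_inv _).symm)

/-- The local degree of an edge. -/
def dE : Gt.Edge → ℕ :=
  Quotient.lift f.dH (by
    rintro a b (rfl | rfl)
    · rfl
    · exact (f.dH_inv a).symm)

/-- The ramification degree at a vertex of the source. -/
def Ram (gVt : Gt.V → ℤ) (gV : G.V → ℤ) (w : Gt.V) : ℤ :=
  (f.dV w : ℤ) * G.chiZ gV (f.fV w) - Gt.chiZ gVt w

end HarmonicTo

namespace HarmonicTo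

variable {Gt G : HGraph} (f : HarmonicTo Gt G)

/-- A vertex of the target of a double cover is dilated if it has a unique preimage. -/
def DilV (x : G.V) : Prop := Nat.card {w : Gt.V // f.fV w = x} = 1

/-- An edge of the target of a double cover is dilated if it has a unique preimage. -/
def DilE (e : G.Edge) : Prop := Nat.card {a : Gt.Edge // f.fE a = e} = 1

/-- Adjacency through a dilated edge. -/
def dilAdj (v w : G.V) : Prop :=
  ∃ h, f.DilE (G.edge h) ∧ G.root h = v ∧ G.root (G.inv h) = w

/-- Reachability inside the dilation subgraph. -/
def dilReach (v w : G.V) : Prop := Relation.ReflTransGen f.dilAdj v w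

/-- The valence of a vertex inside the dilation subgraph. -/
noncomputable def dval (x : G.V) : ℕ :=
  Nat.card {h : G.H // G.root h = x ∧ f.DilE (G.edge h)}

/-- The genus of the connected component of the dilation subgraph containing `y`. -/
noncomputable def dilCompGenus (gV : G.V → ℕ) (y : G.V) : ℤ :=
  (Nat.card {e : G.Edge // f.DilE e ∧ f.dilReach y (G.root (Quotient.out e))} : ℤ)
    - Nat.card {z : G.V // f.dilReach y z} + 1
    + ∑ᶠ (z : G.V) (_ : f.dilReach y z), (gV z : ℤ)

/-- The first Betti number of the connected component of the dilation subgraph containing `y`. -/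
noncomputable def dilCompB1 (y : G.V) : ℤ :=
  (Nat.card {e : G.Edge // f.DilE e ∧ f.dilReach y (G.root (Quotient.out e))} : ℤ)
    - Nat.card {z : G.V // f.dilReach y z} + 1

end HarmonicTo

/-!
Let `x̃` be the unique preimage of a dilated vertex `x`. Its local degree is `2`, so over each
half-edge `h` at `x` lie either one half-edge (exactly when `h` is dilated) or two. Counting
half-edges at `x̃` gives `val x̃ + dval x = 2 val x`, and the unramified condition
`χ(x̃) = 2 χ(x)` turns this into `2 g(x̃) = 4 g(x) - 2 + dval x`. As `g(x̃) ≥ 0`, every dilated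
vertex is semistable in `G_dil`. Endpoints of dilated edges are dilated, so a component of `G_dil`
consists of dilated vertices; summing their Euler characteristics, and using that the dilated
valences in a component add up to twice its number of edges, gives `2 - 2 g ≤ 0` for its genus.
-/

open Finset

namespace HGraph

variable (G : HGraph)

lemma edge_eq_edge_iff {a b : G.H} : G.edge a = G.edge b ↔ b = a ∨ b = G.inv a :=
  Quotient.eq

lemma edge_out (e : G.Edge) : G.edge e.out = e :=
  Quotient.out_eq e

/-- Handshake lemma: each edge of `S` at `C` contributes both of its half-edges. -/
lemma sum_card_rooted_eq_two_mul (S : G.Edge → Prop) (C : G.V → Prop)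
    (hC : ∀ h, C (G.root h) → S (G.edge h) → C (G.root (G.inv h))) :
    ∑ v ∈ ({v | C v} : Finset G.V), #{h | G.root h = v ∧ S (G.edge h)}
      = 2 * #{e | S e ∧ C (G.root e.out)} := by
  set Hs : Finset G.H := {h | C (G.root h) ∧ S (G.edge h)}
  set Es : Finset G.Edge := {e | S e ∧ C (G.root e.out)}
  have hroot : #Hs = ∑ v ∈ ({v | C v} : Finset G.V), #{h ∈ Hs | G.root h = v} :=
    card_eq_sum_card_fiberwise fun h hh => by simpa using (mem_filter.mp hh).2.1
  have hedge : #Hs = ∑ e ∈ Es, #{h ∈ Hs | G.edge h = e} := by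
    refine card_eq_sum_card_fiberwise fun h hh => ?_
    obtain ⟨-, hCh, hSh⟩ := mem_filter.mp hh
    refine mem_filter.mpr ⟨mem_univ _, hSh, ?_⟩
    rcases (G.edge_eq_edge_iff).mp (G.edge_out (G.edge h)).symm with hout | hout <;> rw [hout]
    · exact hCh
    · exact hC h hCh hSh
  have hfiber : ∀ e ∈ Es, #{h ∈ Hs | G.edge h = e} = 2 := by
    intro e he
    obtain ⟨-, hSe, hCe⟩ := mem_filter.mp he
    have hae : G.edge e.out = e := G.edge_out e
    have ha : e.out ∈ Hs := mem_filter.mpr ⟨mem_univ _, hCe, by rwa [hae]⟩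
    have hia : G.inv e.out ∈ Hs :=
      mem_filter.mpr ⟨mem_univ _, hC _ hCe (by rwa [hae]), by rwa [G.edge_inv, hae]⟩
    have hpair : ({h ∈ Hs | G.edge h = e} : Finset G.H) = {e.out, G.inv e.out} := by
      ext h
      simp only [mem_filter, mem_insert, mem_singleton]
      constructor
      · rintro ⟨-, hh⟩
        rw [← hae] at hh
        exact G.edge_eq_edge_iff.mp hh.symm
      · rintro (rfl | rfl)
        · exact ⟨ha, hae⟩
        · exact ⟨hia, by rw [G.edge_inv, hae]⟩
    rw [hpair, card_pair (G.inv_ne _).symm]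
  calc ∑ v ∈ ({v | C v} : Finset G.V), #{h | G.root h = v ∧ S (G.edge h)}
      = ∑ v ∈ ({v | C v} : Finset G.V), #{h ∈ Hs | G.root h = v} := by
        refine sum_congr rfl fun v hv => congrArg card ?_
        ext h
        simp only [Hs, mem_filter, mem_univ, true_and] at hv ⊢
        exact ⟨fun ⟨hr, hS⟩ => ⟨⟨hr ▸ hv, hS⟩, hr⟩, fun ⟨⟨_, hS⟩, hr⟩ => ⟨hr, hS⟩⟩
    _ = 2 * #Es := by rw [← hroot, hedge, sum_congr rfl hfiber, sum_const, smul_eq_mul, mul_comm]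

end HGraph

lemma card_eq_one_or_two_of_sum_eq_two {α : Type*} {s : Finset α} {d : α → ℕ}
    (hd : ∀ a ∈ s, 0 < d a) (hs : ∑ a ∈ s, d a = 2) : #s = 1 ∨ #s = 2 := by
  have hle : #s ≤ 2 := by simpa [hs] using card_nsmul_le_sum s d 1 hd
  have hpos : 0 < #s := (nonempty_of_sum_ne_zero (hs ▸ two_ne_zero)).card_pos
  omega

namespace HarmonicTo

variable {Gt G : HGraph} (f : HarmonicTo Gt G)

def IsDegreeTwo : Prop :=
  ∀ v : G.V, ∑ w ∈ Finset.univ.filter (fun w => f.fV w = v), f.dV w = 2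

def IsUnramified (gVt : Gt.V → ℤ) (gV : G.V → ℤ) : Prop :=
  ∀ w : Gt.V, f.Ram gVt gV w = 0

lemma fE_edge (a : Gt.H) : f.fE (Gt.edge a) = G.edge (f.fH a) := rfl

lemma card_fE_fiber_edge (h : G.H) : #{q | f.fE q = G.edge h} = #{a | f.fH a = h} := by
  refine (card_bij (fun a _ => Gt.edge a) ?_ ?_ ?_).symm
  · intro a ha
    simp only [mem_filter, mem_univ, true_and] at ha ⊢
    rw [fE_edge, ha]
  · intro a ha b hb hab
    simp only [mem_filter, mem_univ, true_and] at ha hb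
    rcases (Gt.edge_eq_edge_iff).mp hab with rfl | rfl
    · rfl
    · rw [f.inv_comm, ha] at hb
      exact absurd hb (G.inv_ne h)
  · intro q hq
    simp only [mem_filter, mem_univ, true_and] at hq
    rw [← Gt.edge_out q, fE_edge] at hq
    rcases (G.edge_eq_edge_iff).mp hq with hout | hout
    · exact ⟨q.out, by simp [hout], Gt.edge_out q⟩
    · refine ⟨Gt.inv q.out, by simp [f.inv_comm, hout], ?_⟩
      rw [Gt.edge_inv, Gt.edge_out]

lemma dilE_edge_iff (h : G.H) : f.DilE (G.edge h) ↔ #{a | f.fH a = h} = 1 := by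
  rw [DilE, Nat.card_eq_fintype_card, Fintype.card_subtype, card_fE_fiber_edge]

lemma exists_fH_eq_of_root_eq {w : Gt.V} {h : G.H} (hh : G.root h = f.fV w) :
    ∃ a, Gt.root a = w ∧ f.fH a = h := by
  by_contra! hc
  have hempty : ({a | Gt.root a = w ∧ f.fH a = h} : Finset Gt.H) = ∅ :=
    filter_eq_empty_iff.mpr fun a _ ⟨hr, hf⟩ => hc a hr hf
  have := f.harm w h hh
  rw [hempty, sum_empty] at this
  exact (f.dV_pos w).ne' this

lemma dV_eq_two (hdeg : f.IsDegreeTwo) {xt : Gt.V} (huniq : ∀ w, f.fV w = f.fV xt → w = xt) :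
    f.dV xt = 2 := by
  have hfiber : ({w | f.fV w = f.fV xt} : Finset Gt.V) = {xt} := by
    ext w
    simp only [mem_filter, mem_univ, true_and, mem_singleton]
    exact ⟨huniq w, fun hw => hw ▸ rfl⟩
  have := hdeg (f.fV xt)
  rwa [hfiber, sum_singleton] at this

lemma filter_root_fH_eq {xt : Gt.V} (huniq : ∀ w, f.fV w = f.fV xt → w = xt) {h : G.H}
    (hh : G.root h = f.fV xt) :
    ({a | Gt.root a = xt ∧ f.fH a = h} : Finset Gt.H) = ({a | f.fH a = h} : Finset Gt.H) := by
  ext a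
  simp only [mem_filter, mem_univ, true_and, and_iff_right_iff_imp]
  rintro rfl
  exact huniq _ (by rw [← f.root_comm, hh])

lemma card_fH_fiber_add_ite_dilE (hdeg : f.IsDegreeTwo) {xt : Gt.V}
    (huniq : ∀ w, f.fV w = f.fV xt → w = xt) {h : G.H} (hh : G.root h = f.fV xt) :
    #{a | f.fH a = h} + (if f.DilE (G.edge h) then 1 else 0) = 2 := by
  have hsum : ∑ a ∈ ({a | f.fH a = h} : Finset Gt.H), f.dH a = 2 := by
    rw [← f.filter_root_fH_eq huniq hh, ← f.harm xt h hh, f.dV_eq_two hdeg huniq]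
  rw [f.dilE_edge_iff]
  rcases card_eq_one_or_two_of_sum_eq_two (fun a _ => f.dH_pos a) hsum with h1 | h2
  · rw [h1, if_pos rfl]
  · rw [h2, if_neg (by omega)]

lemma val_add_dval_eq (hdeg : f.IsDegreeTwo) {xt : Gt.V}
    (huniq : ∀ w, f.fV w = f.fV xt → w = xt) :
    Gt.val xt + f.dval (f.fV xt) = 2 * G.val (f.fV xt) := by
  set A : Finset G.H := {h | G.root h = f.fV xt}
  have hval : Gt.val xt = ∑ h ∈ A, #{a | f.fH a = h} := by
    rw [HGraph.val, card_eq_sum_card_fiberwise (f := f.fH) (t := A)]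
    · refine sum_congr rfl fun h hh => ?_
      rw [filter_filter, ← f.filter_root_fH_eq huniq (mem_filter.mp hh).2]
    · intro a ha
      simp only [coe_filter, mem_univ, true_and, Set.mem_ofPred_eq, A] at ha ⊢
      rw [f.root_comm, ha]
  have hdval : f.dval (f.fV xt) = ∑ h ∈ A, if f.DilE (G.edge h) then 1 else 0 := by
    rw [dval, Nat.card_eq_fintype_card, Fintype.card_subtype, sum_boole, filter_filter]
    rfl
  rw [hval, hdval, ← sum_add_distrib,
    sum_congr rfl fun h hh => f.card_fH_fiber_add_ite_dilE hdeg huniq (mem_filter.mp hh).2,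
    sum_const, smul_eq_mul, mul_comm, HGraph.val]

lemma two_mul_genus_eq {gVt : Gt.V → ℤ} {gV : G.V → ℤ} (hunram : f.IsUnramified gVt gV)
    (hdeg : f.IsDegreeTwo) {xt : Gt.V} (huniq : ∀ w, f.fV w = f.fV xt → w = xt) :
    2 * gVt xt = 4 * gV (f.fV xt) - 2 + f.dval (f.fV xt) := by
  have hram := hunram xt
  have hval := f.val_add_dval_eq hdeg huniq
  rw [Ram, HGraph.chiZ, HGraph.chiZ, f.dV_eq_two hdeg huniq] at hram
  push_cast at hram
  omega

lemma DilV.exists_unique_preimage {y : G.V} (hy : f.DilV y) :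
    ∃ yt, f.fV yt = y ∧ ∀ w, f.fV w = y → w = yt := by
  obtain ⟨⟨yt, hyt⟩, huniq⟩ := Nat.card_eq_one_iff_exists.mp hy
  exact ⟨yt, hyt, fun w hw => congrArg Subtype.val (huniq ⟨w, hw⟩)⟩

/-- Two preimages of the root of `h` would carry two distinct half-edges over `h`. -/
lemma dilV_root_of_dilE (hdeg : f.IsDegreeTwo) {h : G.H} (hd : f.DilE (G.edge h)) :
    f.DilV (G.root h) := by
  refine Nat.card_eq_one_iff_unique.mpr ⟨⟨fun ⟨w₁, hw₁⟩ ⟨w₂, hw₂⟩ => ?_⟩, ?_⟩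
  · obtain ⟨a₁, rfl, ha₁⟩ := f.exists_fH_eq_of_root_eq hw₁.symm
    obtain ⟨a₂, rfl, ha₂⟩ := f.exists_fH_eq_of_root_eq hw₂.symm
    have hle := ((f.dilE_edge_iff h).mp hd).le
    rw [card_le_one] at hle
    simp only [Subtype.mk.injEq]
    rw [hle a₁ (by simpa using ha₁) a₂ (by simpa using ha₂)]
  · obtain ⟨w, hw⟩ : ({w | f.fV w = G.root h} : Finset Gt.V).Nonempty :=
      nonempty_of_sum_ne_zero (by rw [hdeg]; exact two_ne_zero)
    exact ⟨⟨w, (mem_filter.mp hw).2⟩⟩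

lemma dilV_of_dilReach (hdeg : f.IsDegreeTwo) {y z : G.V} (hy : f.DilV y)
    (hz : f.dilReach y z) : f.DilV z := by
  induction hz with
  | refl => exact hy
  | tail _ hadj _ =>
    obtain ⟨h, hd, -, rfl⟩ := hadj
    exact f.dilV_root_of_dilE hdeg (by rwa [G.edge_inv])

lemma sum_dval_dilReach (y : G.V) :
    ∑ z ∈ ({z | f.dilReach y z} : Finset G.V), f.dval z
      = 2 * #{e | f.DilE e ∧ f.dilReach y (G.root e.out)} := by
  rw [← G.sum_card_rooted_eq_two_mul f.DilE (f.dilReach y)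
    fun h hreach hd => hreach.tail ⟨h, hd, rfl, rfl⟩]
  refine sum_congr rfl fun z _ => ?_
  rw [dval, Nat.card_eq_fintype_card, Fintype.card_subtype]

lemma dilCompGenus_eq (gV : G.V → ℕ) (y : G.V) :
    f.dilCompGenus gV y = (#{e | f.DilE e ∧ f.dilReach y (G.root e.out)} : ℤ)
      - #({z | f.dilReach y z} : Finset G.V) + 1
      + ∑ z ∈ ({z | f.dilReach y z} : Finset G.V), (gV z : ℤ) := by
  rw [dilCompGenus, Nat.card_eq_fintype_card, Fintype.card_subtype, Nat.card_eq_fintype_card,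
    Fintype.card_subtype, finsum_cond_eq_sum_of_cond_iff]
  simp

lemma one_le_dilCompGenus (gV : G.V → ℕ) (y : G.V)
    (hsemi : ∀ z, f.dilReach y z → (2 : ℤ) - 2 * gV z - f.dval z ≤ 0) :
    1 ≤ f.dilCompGenus gV y := by
  set C : Finset G.V := {z | f.dilReach y z}
  have hsum : ∑ z ∈ C, ((2 : ℤ) - 2 * gV z - f.dval z) ≤ 0 :=
    sum_nonpos fun z hz => hsemi z (mem_filter.mp hz).2
  have hdval : ∑ z ∈ C, (f.dval z : ℤ) = 2 * #{e | f.DilE e ∧ f.dilReach y (G.root e.out)} := by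
    exact_mod_cast f.sum_dval_dilReach y
  rw [sum_sub_distrib, sum_sub_distrib, sum_const, ← mul_sum, hdval, nsmul_eq_mul] at hsum
  rw [dilCompGenus_eq]
  linarith

end HarmonicTo

theorem dilated_vertex_genus_general (Gt G : HGraph) (gVt : Gt.V → ℕ) (gV : G.V → ℕ)
    (f : HarmonicTo Gt G)
    (hunram : ∀ w : Gt.V, f.Ram (fun u => (gVt u : ℤ)) (fun u => (gV u : ℤ)) w = 0)
    (hdeg2 : ∀ v : G.V, ∑ w ∈ Finset.univ.filter (fun w => f.fV w = v), f.dV w = 2)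
    (x : G.V) (xt : Gt.V) (hxt : f.fV xt = x) (huniq : ∀ w : Gt.V, f.fV w = x → w = xt) :
    (∃ k : ℕ, f.dval x = 2 * k ∧ (gVt xt : ℤ) = 2 * (gV x : ℤ) - 1 + k) ∧
    (f.dval x = 0 → 1 ≤ gV x) ∧
    (∀ y : G.V, f.DilV y → (2 : ℤ) - 2 * (gV y : ℤ) - f.dval y ≤ 0) ∧
    (∀ y : G.V, f.DilV y → 1 ≤ f.dilCompGenus gV y) := by
  subst hxt
  have hgenus := f.two_mul_genus_eq hunram hdeg2 huniq
  have hsemi : ∀ y, f.DilV y → (2 : ℤ) - 2 * (gV y : ℤ) - f.dval y ≤ 0 := by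
    intro y hy
    obtain ⟨yt, rfl, hyt⟩ := hy.exists_unique_preimage
    have := f.two_mul_genus_eq hunram hdeg2 hyt
    omega
  refine ⟨⟨f.dval (f.fV xt) / 2, by omega, by omega⟩, fun hzero => by omega, hsemi, ?_⟩
  exact fun y hy => f.one_le_dilCompGenus gV y fun z hz => hsemi z (f.dilV_of_dilReach hdeg2 hy hz)

/-- Let `π : G̃ → G` be a double cover and `x` a dilated vertex with unique
preimage `x̃`. Then `g(x̃) = 2g(x) − 1 + dval(x)/2`; in particular `dval(x)` is even, and if
`dval(x) = 0` then `g(x) ≥ 1`. Consequently every connected component of the dilation subgraph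
is semistable, and in particular has genus at least 1. -/
theorem dilated_vertex_genus (Gt G : HGraph) (gVt : Gt.V → ℕ) (gV : G.V → ℕ)
    (f : HarmonicTo Gt G) (hconnt : Gt.Connected) (hconn : G.Connected)
    (hunram : ∀ w : Gt.V, f.Ram (fun u => (gVt u : ℤ)) (fun u => (gV u : ℤ)) w = 0)
    (hdeg2 : ∀ v : G.V, ∑ w ∈ Finset.univ.filter (fun w => f.fV w = v), f.dV w = 2)
    (x : G.V) (xt : Gt.V) (hxt : f.fV xt = x) (huniq : ∀ w : Gt.V, f.fV w = x → w = xt) :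
    (∃ k : ℕ, f.dval x = 2 * k ∧ (gVt xt : ℤ) = 2 * (gV x : ℤ) - 1 + k) ∧
    (f.dval x = 0 → 1 ≤ gV x) ∧
    (∀ y : G.V, f.DilV y → (2 : ℤ) - 2 * (gV y : ℤ) - f.dval y ≤ 0) ∧
    (∀ y : G.V, f.DilV y → 1 ≤ f.dilCompGenus gV y) :=
  dilated_vertex_genus_general Gt G gVt gV f hunram hdeg2 x xt hxt huniq
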